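/- arXiv:2307.16300 — 2 statements merged into one kernel-verified Lean document; each statement's English description precedes it below -/
import Mathlib

section
/- There exist constants C > 0 and c₀ > 0 such that for every ξ ∈ ℝ and every differentiable function W : [0,∞) → ℂ³ satisfying A⁰·W'(t) + (i·ξ·A(ξ) + ξ²·B)·W(t) = 0 for all t ≥ 0 (the real matrices acting on ℂ³ by complexification), the estimate (1+ξ²)·|W₁(t)|² + |W₂(t)|² + |W₃(t)|² ≤ C·exp(−2·c₀·ξ²·t)·[(1+ξ²)·|W₁(0)|² + |W₂(0)|² + |W₃(0)|²] holds for all t ≥ 0, with C and c₀ independent of ξ and of W. -/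
/-!
Kawashima-type energy method. The symmetrizer energy
`E₀ = β|W₀|² + ρ²|W₁|² + (e_θρ²/θ)|W₂|²` satisfies `E₀' = -2ξ²(μρ|W₁|² + (αρ/θ)|W₂|²)`, which
does not dissipate the density component. Adding the compensating term `ερξ Im(W̄₀ W₁)` for a
small `ε` gives an energy `E` with `|E - E₀| ≤ E₀/2` and `E' ≤ -c ξ² E₀ ≤ -(2c/3) ξ² E`, uniformly
in `ξ`. Grönwall's inequality, together with `E₀ ≍ (1+ξ²)|W₀|² + |W₁|² + |W₂|²` (the capillarity
makes `β = p_ρ + ξ²kρ` grow like `1 + ξ²`), gives the estimate.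
-/

open Matrix Filter Topology
open scoped InnerProductSpace

theorem eventually_mul_le (a : ℝ) {b : ℝ} (hb : 0 < b) : ∀ᶠ ε in 𝓝[>] (0 : ℝ), ε * a ≤ b := by
  have : Tendsto (fun ε : ℝ ↦ ε * a) (𝓝 0) (𝓝 0) := by
    simpa using (continuous_mul_const a).tendsto (0 : ℝ)
  exact nhdsWithin_le_nhds (this.eventually (eventually_le_nhds hb))

theorem le_mul_exp_of_hasDerivAt_le_mul {f f' : ℝ → ℝ} {K t : ℝ}
    (hf : ∀ s, 0 ≤ s → HasDerivAt f (f' s) s) (hbound : ∀ s, 0 ≤ s → f' s ≤ K * f s)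
    (ht : 0 ≤ t) : f t ≤ f 0 * Real.exp (K * t) := by
  have h := le_gronwallBound_of_liminf_deriv_right_le (δ := f 0) (ε := 0) (b := t)
    (fun s hs ↦ (hf s hs.1).continuousAt.continuousWithinAt)
    (fun s hs _ hr ↦ (hf s hs.1).hasDerivWithinAt.liminf_right_slope_le hr)
    le_rfl (fun s hs ↦ by simpa using hbound s hs.1) t ⟨ht, le_rfl⟩
  simpa [gronwallBound_ε0] using h

theorem abs_inner_I_mul_le (z w : ℂ) : |⟪Complex.I * z, w⟫_ℝ| ≤ ‖z‖ * ‖w‖ := by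
  simpa using abs_real_inner_le_norm (Complex.I * z) w

theorem mul_le_half_add_sq {p : ℝ} (hp : 0 < p) (x y : ℝ) :
    x * y ≤ (p * x ^ 2 + y ^ 2 / p) / 2 := by
  have hsq : 0 ≤ (p * x - y) ^ 2 / (2 * p) := by positivity
  have : (p * x ^ 2 + y ^ 2 / p) / 2 = x * y + (p * x - y) ^ 2 / (2 * p) := by
    field_simp; ring
  linarith

noncomputable section

namespace NSFK

variable (ρ θ pρ pθ eθ k μ α u : ℝ)

def A₀ : Matrix (Fin 3) (Fin 3) ℂ :=
  ((1 / θ) • !![pρ / ρ, 0, 0; 0, ρ, 0; 0, 0, eθ * ρ / θ]).map (fun x : ℝ ↦ (x : ℂ))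

def A (ξ : ℝ) : Matrix (Fin 3) (Fin 3) ℂ :=
  ((1 / θ) • !![pρ * u / ρ, pρ, 0; pρ + ξ ^ 2 * k * ρ, ρ * u, pθ; 0, pθ, ρ * u * eθ / θ]).map
    (fun x : ℝ ↦ (x : ℂ))

def B : Matrix (Fin 3) (Fin 3) ℂ :=
  ((1 / θ) • !![0, 0, 0; 0, μ, 0; 0, 0, α / θ]).map (fun x : ℝ ↦ (x : ℂ))

def IsSolution (ξ : ℝ) (W : ℝ → Fin 3 → ℂ) : Prop :=
  ∀ t : ℝ, 0 ≤ t → ∃ D : Fin 3 → ℂ, HasDerivAt W D t ∧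
    (A₀ ρ θ pρ eθ).mulVec D +
      ((Complex.I * (ξ : ℂ)) • A ρ θ pρ pθ eθ k u ξ + ((ξ : ℂ) ^ 2) • B θ μ α).mulVec (W t) = 0

def energy (ξ : ℝ) (z : Fin 3 → ℂ) : ℝ :=
  (pρ + ξ ^ 2 * k * ρ) * ‖z 0‖ ^ 2 + ρ ^ 2 * ‖z 1‖ ^ 2 + eθ * ρ ^ 2 / θ * ‖z 2‖ ^ 2

-- `⟪i z₀, z₁⟫_ℝ = Im (z̄₀ z₁)`
def correctedEnergy (ε ξ : ℝ) (z : Fin 3 → ℂ) : ℝ :=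
  energy ρ θ pρ eθ k ξ z + ε * ρ * ξ * ⟪Complex.I * z 0, z 1⟫_ℝ

def dissipation (ε ξ : ℝ) (z : Fin 3 → ℂ) : ℝ :=
  ε * (pρ + ξ ^ 2 * k * ρ) * ‖z 0‖ ^ 2 + (2 * μ * ρ - ε * ρ ^ 2) * ‖z 1‖ ^ 2
    + 2 * α * ρ / θ * ‖z 2‖ ^ 2 + ε * pθ * ⟪z 0, z 2⟫_ℝ + ε * μ * ξ * ⟪Complex.I * z 0, z 1⟫_ℝ

def weightedNormSq (ξ : ℝ) (z : Fin 3 → ℂ) : ℝ :=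
  (1 + ξ ^ 2) * ‖z 0‖ ^ 2 + ‖z 1‖ ^ 2 + ‖z 2‖ ^ 2

variable {ρ θ pρ pθ eθ k μ α u : ℝ}

theorem components_of_mulVec_eq_zero {ξ : ℝ} {z d : Fin 3 → ℂ}
    (hρ : ρ ≠ 0) (hθ : θ ≠ 0) (hpρ : pρ ≠ 0)
    (h : (A₀ ρ θ pρ eθ).mulVec d +
      ((Complex.I * (ξ : ℂ)) • A ρ θ pρ pθ eθ k u ξ + ((ξ : ℂ) ^ 2) • B θ μ α).mulVec z = 0) :
    d 0 = -(Complex.I * ξ) * (u * z 0 + ρ * z 1) ∧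
    ρ * d 1 = -(Complex.I * ξ) * ((pρ + ξ ^ 2 * k * ρ) * z 0 + ρ * u * z 1 + pθ * z 2)
      - ξ ^ 2 * μ * z 1 ∧
    (eθ * ρ / θ : ℝ) * d 2 = -(Complex.I * ξ) * (pθ * z 1 + (ρ * u * eθ / θ : ℝ) * z 2)
      - ξ ^ 2 * (α / θ : ℝ) * z 2 := by
  have h0 := congrFun h 0
  have h1 := congrFun h 1
  have h2 := congrFun h 2
  simp only [A₀, A, B, one_div, smul_of, smul_cons, smul_eq_mul, mul_zero, smul_empty,
    Pi.add_apply, mulVec, dotProduct, map_apply, of_apply, cons_val', cons_val_fin_one,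
    cons_val_zero, cons_val_one, cons_val, Fin.sum_univ_three, Matrix.add_apply,
    Matrix.smul_apply, Pi.zero_apply, zero_mul, add_zero, zero_add, Complex.ofReal_mul,
    Complex.ofReal_inv, Complex.ofReal_div, Complex.ofReal_zero, Complex.ofReal_add,
    Complex.ofReal_pow] at h0 h1 h2
  have : (θ : ℂ) ≠ 0 := by exact_mod_cast hθ
  have : (ρ : ℂ) ≠ 0 := by exact_mod_cast hρ
  have : (pρ : ℂ) ≠ 0 := by exact_mod_cast hpρ
  refine ⟨?_, ?_, ?_⟩
  · linear_combination (norm := skip) (θ * ρ / pρ : ℂ) * h0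
    field_simp
    ring
  · linear_combination (norm := skip) (θ : ℂ) * h1
    field_simp
    ring
  · linear_combination (norm := skip) (θ : ℂ) * h2
    push_cast
    field_simp
    ring

theorem hasDerivAt_correctedEnergy {W : ℝ → Fin 3 → ℂ} {D : Fin 3 → ℂ} {t : ℝ}
    (hW : HasDerivAt W D t) (ε ξ : ℝ) :
    HasDerivAt (fun s ↦ correctedEnergy ρ θ pρ eθ k ε ξ (W s))
      ((pρ + ξ ^ 2 * k * ρ) * (2 * ⟪W t 0, D 0⟫_ℝ) + ρ ^ 2 * (2 * ⟪W t 1, D 1⟫_ℝ)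
        + eθ * ρ ^ 2 / θ * (2 * ⟪W t 2, D 2⟫_ℝ)
        + ε * ρ * ξ * (⟪Complex.I * W t 0, D 1⟫_ℝ + ⟪Complex.I * D 0, W t 1⟫_ℝ)) t := by
  have hW' (j : Fin 3) : HasDerivAt (W · j) (D j) t := hasDerivAt_pi.mp hW j
  exact ((((hW' 0).norm_sq.const_mul _).add ((hW' 1).norm_sq.const_mul _)).add
    ((hW' 2).norm_sq.const_mul _)).add
    ((((hW' 0).const_mul Complex.I).inner ℝ (hW' 1)).const_mul _)

theorem correctedEnergy_deriv_eq {ε ξ : ℝ} {z d : Fin 3 → ℂ}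
    (h0 : d 0 = -(Complex.I * ξ) * (u * z 0 + ρ * z 1))
    (h1 : ρ * d 1 = -(Complex.I * ξ) * ((pρ + ξ ^ 2 * k * ρ) * z 0 + ρ * u * z 1 + pθ * z 2)
      - ξ ^ 2 * μ * z 1)
    (h2 : (eθ * ρ / θ : ℝ) * d 2 = -(Complex.I * ξ) * (pθ * z 1 + (ρ * u * eθ / θ : ℝ) * z 2)
      - ξ ^ 2 * (α / θ : ℝ) * z 2) :
    (pρ + ξ ^ 2 * k * ρ) * (2 * ⟪z 0, d 0⟫_ℝ) + ρ ^ 2 * (2 * ⟪z 1, d 1⟫_ℝ)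
        + eθ * ρ ^ 2 / θ * (2 * ⟪z 2, d 2⟫_ℝ)
        + ε * ρ * ξ * (⟪Complex.I * z 0, d 1⟫_ℝ + ⟪Complex.I * d 0, z 1⟫_ℝ) =
      -ξ ^ 2 * dissipation ρ θ pρ pθ k μ α ε ξ z := by
  obtain ⟨h0r, h0i⟩ := Complex.ext_iff.mp h0
  obtain ⟨h1r, h1i⟩ := Complex.ext_iff.mp h1
  obtain ⟨h2r, h2i⟩ := Complex.ext_iff.mp h2
  simp only [← Complex.ofReal_pow, Complex.mul_re, Complex.mul_im, Complex.neg_re,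
    Complex.neg_im, Complex.add_re, Complex.add_im, Complex.sub_re, Complex.sub_im,
    Complex.ofReal_re, Complex.ofReal_im, Complex.I_re, Complex.I_im] at h0r h0i h1r h1i h2r h2i
  -- the coefficients are those of `(d j).re` and `(d j).im` on the left-hand side
  simp only [dissipation, Complex.inner, Complex.sq_norm, Complex.normSq_apply, Complex.mul_re,
    Complex.mul_im, Complex.conj_re, Complex.conj_im, Complex.I_re, Complex.I_im]
  linear_combination (2 * (pρ + ξ ^ 2 * k * ρ) * (z 0).re + ε * ρ * ξ * (z 1).im) * h0r
    + (2 * (pρ + ξ ^ 2 * k * ρ) * (z 0).im - ε * ρ * ξ * (z 1).re) * h0i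
    + (2 * ρ * (z 1).re - ε * ξ * (z 0).im) * h1r + (2 * ρ * (z 1).im + ε * ξ * (z 0).re) * h1i
    + 2 * ρ * (z 2).re * h2r + 2 * ρ * (z 2).im * h2i

theorem IsSolution.hasDerivAt_correctedEnergy {ξ : ℝ} {W : ℝ → Fin 3 → ℂ}
    (hW : IsSolution ρ θ pρ pθ eθ k μ α u ξ W) (hρ : ρ ≠ 0) (hθ : θ ≠ 0) (hpρ : pρ ≠ 0)
    (ε : ℝ) {t : ℝ} (ht : 0 ≤ t) :
    HasDerivAt (fun s ↦ correctedEnergy ρ θ pρ eθ k ε ξ (W s))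
      (-ξ ^ 2 * dissipation ρ θ pρ pθ k μ α ε ξ (W t)) t := by
  obtain ⟨D, hD, hODE⟩ := hW t ht
  obtain ⟨h0, h1, h2⟩ := components_of_mulVec_eq_zero hρ hθ hpρ hODE
  exact correctedEnergy_deriv_eq h0 h1 h2 ▸ NSFK.hasDerivAt_correctedEnergy hD ε ξ

theorem abs_correctedEnergy_sub_energy_le {ε ξ : ℝ} (hρ : 0 ≤ ρ) (hθ : 0 ≤ θ) (hpρ : 0 ≤ pρ)
    (heθ : 0 ≤ eθ) (hε : 0 ≤ ε) (hεk : ε ≤ k) (hερ : ε ≤ ρ) (z : Fin 3 → ℂ) :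
    |correctedEnergy ρ θ pρ eθ k ε ξ z - energy ρ θ pρ eθ k ξ z| ≤
      energy ρ θ pρ eθ k ξ z / 2 := by
  have hamgm : 2 * (|ξ| * ‖z 0‖) * ‖z 1‖ ≤ ξ ^ 2 * ‖z 0‖ ^ 2 + ‖z 1‖ ^ 2 := by
    nlinarith [two_mul_le_add_sq (|ξ| * ‖z 0‖) ‖z 1‖, sq_abs ξ]
  have hthird : 0 ≤ eθ * ρ ^ 2 / θ * ‖z 2‖ ^ 2 := by positivity
  calc |correctedEnergy ρ θ pρ eθ k ε ξ z - energy ρ θ pρ eθ k ξ z|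
      = ε * ρ * |ξ| * |⟪Complex.I * z 0, z 1⟫_ℝ| := by
        simp [correctedEnergy, abs_mul, abs_of_nonneg hε, abs_of_nonneg hρ]
    _ ≤ ε * ρ * |ξ| * (‖z 0‖ * ‖z 1‖) := by gcongr; exact abs_inner_I_mul_le _ _
    _ ≤ (k * ρ * ξ ^ 2 * ‖z 0‖ ^ 2 + ρ ^ 2 * ‖z 1‖ ^ 2) / 2 := by
        linear_combination (mul_le_mul_of_nonneg_left hamgm (mul_nonneg hε hρ)
          + mul_le_mul_of_nonneg_right hεk (by positivity : 0 ≤ ρ * ξ ^ 2 * ‖z 0‖ ^ 2)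
          + mul_le_mul_of_nonneg_right hερ (by positivity : 0 ≤ ρ * ‖z 1‖ ^ 2)) / 2
    _ ≤ energy ρ θ pρ eθ k ξ z / 2 := by
        unfold energy
        linarith [mul_nonneg hpρ (sq_nonneg ‖z 0‖)]

theorem abs_thermal_cross_term_le {ε : ℝ} (hθ : 0 < θ) (hpρ : 0 < pρ) (hε : 0 ≤ ε)
    (hεpθ : ε * (θ * pθ ^ 2) ≤ 2 * α * ρ * pρ) (z : Fin 3 → ℂ) :
    |ε * pθ * ⟪z 0, z 2⟫_ℝ| ≤ ε / 2 * pρ * ‖z 0‖ ^ 2 + α * ρ / θ * ‖z 2‖ ^ 2 := by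
  have hcoef : ε * pθ ^ 2 / (2 * pρ) ≤ α * ρ / θ := by
    rw [div_le_div_iff₀ (by positivity) hθ]; linarith
  calc |ε * pθ * ⟪z 0, z 2⟫_ℝ| ≤ ε * |pθ| * (‖z 0‖ * ‖z 2‖) := by
        rw [abs_mul, abs_mul, abs_of_nonneg hε]
        gcongr
        exact abs_real_inner_le_norm _ _
    _ = ε * (‖z 0‖ * (|pθ| * ‖z 2‖)) := by ring
    _ ≤ ε * ((pρ * ‖z 0‖ ^ 2 + (|pθ| * ‖z 2‖) ^ 2 / pρ) / 2) := by
        gcongr; exact mul_le_half_add_sq hpρ _ _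
    _ = ε / 2 * pρ * ‖z 0‖ ^ 2 + ε * pθ ^ 2 / (2 * pρ) * ‖z 2‖ ^ 2 := by
        rw [mul_pow, sq_abs]; field_simp
    _ ≤ ε / 2 * pρ * ‖z 0‖ ^ 2 + α * ρ / θ * ‖z 2‖ ^ 2 := by gcongr

theorem abs_viscous_cross_term_le {ε ξ : ℝ} (hρ : 0 < ρ) (hk : 0 < k) (hε : 0 ≤ ε)
    (hεμ : ε * (μ ^ 2 + 2 * k * ρ ^ 3) ≤ 2 * k * μ * ρ ^ 2) (z : Fin 3 → ℂ) :
    |ε * μ * ξ * ⟪Complex.I * z 0, z 1⟫_ℝ| ≤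
      ε / 2 * (k * ρ) * ξ ^ 2 * ‖z 0‖ ^ 2 + (μ * ρ - ε * ρ ^ 2) * ‖z 1‖ ^ 2 := by
  have hkρ : 0 < k * ρ := mul_pos hk hρ
  have hcoef : ε * μ ^ 2 / (2 * (k * ρ)) ≤ μ * ρ - ε * ρ ^ 2 := by
    rw [div_le_iff₀ (by positivity)]; nlinarith
  calc |ε * μ * ξ * ⟪Complex.I * z 0, z 1⟫_ℝ| ≤ ε * |μ| * |ξ| * (‖z 0‖ * ‖z 1‖) := by
        rw [abs_mul, abs_mul, abs_mul, abs_of_nonneg hε]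
        gcongr
        exact abs_inner_I_mul_le _ _
    _ = ε * ((|ξ| * ‖z 0‖) * (|μ| * ‖z 1‖)) := by ring
    _ ≤ ε * ((k * ρ * (|ξ| * ‖z 0‖) ^ 2 + (|μ| * ‖z 1‖) ^ 2 / (k * ρ)) / 2) := by
        gcongr; exact mul_le_half_add_sq hkρ _ _
    _ = ε / 2 * (k * ρ) * ξ ^ 2 * ‖z 0‖ ^ 2 + ε * μ ^ 2 / (2 * (k * ρ)) * ‖z 1‖ ^ 2 := by
        rw [mul_pow, mul_pow, sq_abs, sq_abs]; field_simp
    _ ≤ _ := by gcongr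

theorem mul_energy_le_dissipation {ε c ξ : ℝ} (hρ : 0 < ρ) (hθ : 0 < θ) (hpρ : 0 < pρ)
    (hk : 0 < k) (hε : 0 ≤ ε) (hεpθ : ε * (θ * pθ ^ 2) ≤ 2 * α * ρ * pρ)
    (hεμ : ε * (μ ^ 2 + 2 * k * ρ ^ 3) ≤ 2 * k * μ * ρ ^ 2)
    (hcε : c * 2 ≤ ε) (hcμ : c * ρ ≤ μ) (hcα : c * (eθ * ρ) ≤ α) (z : Fin 3 → ℂ) :
    c * energy ρ θ pρ eθ k ξ z ≤ dissipation ρ θ pρ pθ k μ α ε ξ z := by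
  have hR := abs_le.mp (abs_thermal_cross_term_le hθ hpρ hε hεpθ z)
  have hJ := abs_le.mp (abs_viscous_cross_term_le (ξ := ξ) hρ hk hε hεμ z)
  have h0 := mul_le_mul_of_nonneg_right hcε
    (by positivity : 0 ≤ (pρ + ξ ^ 2 * k * ρ) * ‖z 0‖ ^ 2)
  have h1 := mul_le_mul_of_nonneg_right hcμ (by positivity : 0 ≤ ρ * ‖z 1‖ ^ 2)
  have h2 := mul_le_mul_of_nonneg_right hcα (by positivity : 0 ≤ ρ / θ * ‖z 2‖ ^ 2)
  unfold energy dissipation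
  linear_combination hR.1 + hJ.1 + h0 / 2 + h1 + h2

theorem mul_weightedNormSq_le_energy {m ξ : ℝ} (hm₁ : m ≤ pρ) (hm₂ : m ≤ k * ρ) (hm₃ : m ≤ ρ ^ 2)
    (hm₄ : m ≤ eθ * ρ ^ 2 / θ) (z : Fin 3 → ℂ) :
    m * weightedNormSq ξ z ≤ energy ρ θ pρ eθ k ξ z := by
  unfold weightedNormSq energy
  linear_combination mul_le_mul_of_nonneg_right hm₁ (sq_nonneg ‖z 0‖)
    + mul_le_mul_of_nonneg_right hm₂ (by positivity : 0 ≤ ξ ^ 2 * ‖z 0‖ ^ 2)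
    + mul_le_mul_of_nonneg_right hm₃ (sq_nonneg ‖z 1‖)
    + mul_le_mul_of_nonneg_right hm₄ (sq_nonneg ‖z 2‖)

theorem energy_le_mul_weightedNormSq {M ξ : ℝ} (hM₁ : pρ ≤ M) (hM₂ : k * ρ ≤ M) (hM₃ : ρ ^ 2 ≤ M)
    (hM₄ : eθ * ρ ^ 2 / θ ≤ M) (z : Fin 3 → ℂ) :
    energy ρ θ pρ eθ k ξ z ≤ M * weightedNormSq ξ z := by
  unfold weightedNormSq energy
  linear_combination mul_le_mul_of_nonneg_right hM₁ (sq_nonneg ‖z 0‖)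
    + mul_le_mul_of_nonneg_right hM₂ (by positivity : 0 ≤ ξ ^ 2 * ‖z 0‖ ^ 2)
    + mul_le_mul_of_nonneg_right hM₃ (sq_nonneg ‖z 1‖)
    + mul_le_mul_of_nonneg_right hM₄ (sq_nonneg ‖z 2‖)

theorem exists_energy_le_mul_weightedNormSq (hρ : 0 < ρ) (hθ : 0 < θ) (hpρ : 0 < pρ)
    (heθ : 0 < eθ) (hk : 0 < k) :
    ∃ m M : ℝ, 0 < m ∧ 0 < M ∧ ∀ ξ z, m * weightedNormSq ξ z ≤ energy ρ θ pρ eθ k ξ z ∧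
      energy ρ θ pρ eθ k ξ z ≤ M * weightedNormSq ξ z := by
  obtain ⟨m, hm, hm₁, hm₂, hm₃, hm₄⟩ := (eventually_mem_nhdsWithin.and <|
    (eventually_mul_le 1 hpρ).and <| (eventually_mul_le 1 (mul_pos hk hρ)).and <|
    (eventually_mul_le 1 (pow_pos hρ 2)).and <|
    eventually_mul_le 1 (by positivity : 0 < eθ * ρ ^ 2 / θ)).exists
  rw [mul_one] at hm₁ hm₂ hm₃ hm₄
  have hκ : 0 < eθ * ρ ^ 2 / θ := by positivity
  refine ⟨m, pρ + k * ρ + ρ ^ 2 + eθ * ρ ^ 2 / θ, hm, by positivity, fun ξ z ↦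
    ⟨mul_weightedNormSq_le_energy hm₁ hm₂ hm₃ hm₄ z, energy_le_mul_weightedNormSq ?_ ?_ ?_ ?_ z⟩⟩
  all_goals linarith [mul_pos hk hρ, pow_pos hρ 2]

theorem exists_correctedEnergy_bounds (hρ : 0 < ρ) (hθ : 0 < θ) (hpρ : 0 < pρ) (heθ : 0 < eθ)
    (hk : 0 < k) (hμ : 0 < μ) (hα : 0 < α) :
    ∃ ε c : ℝ, 0 < c ∧ ∀ ξ z,
      |correctedEnergy ρ θ pρ eθ k ε ξ z - energy ρ θ pρ eθ k ξ z| ≤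
        energy ρ θ pρ eθ k ξ z / 2 ∧
      c * energy ρ θ pρ eθ k ξ z ≤ dissipation ρ θ pρ pθ k μ α ε ξ z := by
  obtain ⟨ε, hε, hεk, hερ, hεpθ, hεμ⟩ := (eventually_mem_nhdsWithin.and <|
    (eventually_mul_le 1 hk).and <| (eventually_mul_le 1 hρ).and <|
    (eventually_mul_le (θ * pθ ^ 2) (by positivity : 0 < 2 * α * ρ * pρ)).and <|
    eventually_mul_le (μ ^ 2 + 2 * k * ρ ^ 3) (by positivity : 0 < 2 * k * μ * ρ ^ 2)).exists
  obtain ⟨c, hc, hcε, hcμ, hcα⟩ := (eventually_mem_nhdsWithin.and <|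
    (eventually_mul_le 2 hε).and <| (eventually_mul_le ρ hμ).and <|
    eventually_mul_le (eθ * ρ) hα).exists
  rw [mul_one] at hεk hερ
  exact ⟨ε, c, hc, fun ξ z ↦
    ⟨abs_correctedEnergy_sub_energy_le hρ.le hθ.le hpρ.le heθ.le hε.le hεk hερ z,
      mul_energy_le_dissipation hρ hθ hpρ hk hε.le hεpθ hεμ hcε hcμ hcα z⟩⟩

theorem IsSolution.weightedNormSq_le {ξ ε c m M : ℝ} {W : ℝ → Fin 3 → ℂ}
    (hW : IsSolution ρ θ pρ pθ eθ k μ α u ξ W) (hρ : ρ ≠ 0) (hθ : θ ≠ 0) (hpρ : pρ ≠ 0)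
    (hc : 0 ≤ c) (hm : 0 < m)
    (hE : ∀ z, |correctedEnergy ρ θ pρ eθ k ε ξ z - energy ρ θ pρ eθ k ξ z| ≤
        energy ρ θ pρ eθ k ξ z / 2 ∧
      c * energy ρ θ pρ eθ k ξ z ≤ dissipation ρ θ pρ pθ k μ α ε ξ z)
    (hN : ∀ z, m * weightedNormSq ξ z ≤ energy ρ θ pρ eθ k ξ z ∧
      energy ρ θ pρ eθ k ξ z ≤ M * weightedNormSq ξ z)
    {t : ℝ} (ht : 0 ≤ t) :
    weightedNormSq ξ (W t) ≤
      3 * M / m * Real.exp (-2 * (c / 3) * ξ ^ 2 * t) * weightedNormSq ξ (W 0) := by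
  set E := fun s ↦ correctedEnergy ρ θ pρ eθ k ε ξ (W s)
  set e := fun s ↦ energy ρ θ pρ eθ k ξ (W s)
  have hdecay : E t ≤ E 0 * Real.exp (-2 * (c / 3) * ξ ^ 2 * t) := by
    refine le_mul_exp_of_hasDerivAt_le_mul
      (fun s hs ↦ hW.hasDerivAt_correctedEnergy hρ hθ hpρ ε hs) (fun s _ ↦ ?_) ht
    obtain ⟨hEe, hdiss⟩ := hE (W s)
    have hξc : 0 ≤ c * ξ ^ 2 := by positivity
    nlinarith [mul_le_mul_of_nonneg_left hdiss (sq_nonneg ξ),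
      mul_le_mul_of_nonneg_left (abs_le.mp hEe).2 hξc]
  have hX := Real.exp_pos (-2 * (c / 3) * ξ ^ 2 * t)
  have key : m * weightedNormSq ξ (W t) ≤
      m * (3 * M / m * Real.exp (-2 * (c / 3) * ξ ^ 2 * t) * weightedNormSq ξ (W 0)) :=
    calc m * weightedNormSq ξ (W t) ≤ e t := (hN (W t)).1
      _ ≤ 2 * E t := by linarith [(abs_le.mp (hE (W t)).1).1]
      _ ≤ 2 * (E 0 * Real.exp (-2 * (c / 3) * ξ ^ 2 * t)) := by gcongr
      _ ≤ 2 * (3 / 2 * e 0 * Real.exp (-2 * (c / 3) * ξ ^ 2 * t)) := by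
          gcongr; linarith [(abs_le.mp (hE (W 0)).1).2]
      _ ≤ 3 * (M * weightedNormSq ξ (W 0)) * Real.exp (-2 * (c / 3) * ξ ^ 2 * t) := by
          nlinarith [(hN (W 0)).2]
      _ = _ := by field_simp
  exact le_of_mul_le_mul_left key hm

end NSFK
end

theorem nsfk_pointwise_fourier_decay_general (ρ θ pρ pθ eθ k μ α u : ℝ)
    (hρ : 0 < ρ) (hθ : 0 < θ) (hpρ : 0 < pρ) (heθ : 0 < eθ)
    (hk : 0 < k) (hμ : 0 < μ) (hα : 0 < α) :
    ∃ C : ℝ, 0 < C ∧ ∃ c₀ : ℝ, 0 < c₀ ∧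
      ∀ ξ : ℝ,
        let β : ℝ := pρ + ξ ^ 2 * k * ρ
        let A0 : Matrix (Fin 3) (Fin 3) ℂ :=
          ((1 / θ) • !![pρ / ρ, 0, 0; 0, ρ, 0; 0, 0, eθ * ρ / θ]).map
            (fun x : ℝ => (x : ℂ))
        let A : Matrix (Fin 3) (Fin 3) ℂ :=
          ((1 / θ) • !![pρ * u / ρ, pρ, 0; β, ρ * u, pθ; 0, pθ, ρ * u * eθ / θ]).map
            (fun x : ℝ => (x : ℂ))
        let B : Matrix (Fin 3) (Fin 3) ℂ :=
          ((1 / θ) • !![0, 0, 0; 0, μ, 0; 0, 0, α / θ]).map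
            (fun x : ℝ => (x : ℂ))
        ∀ W : ℝ → (Fin 3 → ℂ),
          (∀ t : ℝ, 0 ≤ t → ∃ D : Fin 3 → ℂ,
            HasDerivAt W D t ∧
              A0.mulVec D +
                ((Complex.I * (ξ : ℂ)) • A + ((ξ : ℂ) ^ 2) • B).mulVec (W t) = 0) →
          ∀ t : ℝ, 0 ≤ t →
            (1 + ξ ^ 2) * ‖W t 0‖ ^ 2 + ‖W t 1‖ ^ 2 + ‖W t 2‖ ^ 2 ≤
              C * Real.exp (-2 * c₀ * ξ ^ 2 * t) *
                ((1 + ξ ^ 2) * ‖W 0 0‖ ^ 2 + ‖W 0 1‖ ^ 2 + ‖W 0 2‖ ^ 2) := by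
  obtain ⟨ε, c, hc, hE⟩ := NSFK.exists_correctedEnergy_bounds (pθ := pθ) hρ hθ hpρ heθ hk hμ hα
  obtain ⟨m, M, hm, hM, hN⟩ := NSFK.exists_energy_le_mul_weightedNormSq hρ hθ hpρ heθ hk
  refine ⟨3 * M / m, by positivity, c / 3, by positivity, fun ξ W hW t ht ↦ ?_⟩
  exact NSFK.IsSolution.weightedNormSq_le (u := u) hW hρ.ne' hθ.ne' hpρ.ne' hc.le hm (hE ξ) (hN ξ) ht

/-- Pointwise decay estimate in Fourier space for the solutions of the linearized
Navier–Stokes–Fourier–Korteweg system `A⁰Ŵ' + (iξA(ξ) + ξ²B)Ŵ = 0`, with the density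
component weighted by `(1+ξ²)`. -/
theorem nsfk_pointwise_fourier_decay (ρ θ pρ pθ eθ k μ α u : ℝ)
    (hρ : 0 < ρ) (hθ : 0 < θ) (hpρ : 0 < pρ) (hpθ : 0 < pθ) (heθ : 0 < eθ)
    (hk : 0 < k) (hμ : 0 < μ) (hα : 0 < α) :
    ∃ C : ℝ, 0 < C ∧ ∃ c₀ : ℝ, 0 < c₀ ∧
      ∀ ξ : ℝ,
        let β : ℝ := pρ + ξ ^ 2 * k * ρ
        let A0 : Matrix (Fin 3) (Fin 3) ℂ :=
          ((1 / θ) • !![pρ / ρ, 0, 0; 0, ρ, 0; 0, 0, eθ * ρ / θ]).map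
            (fun x : ℝ => (x : ℂ))
        let A : Matrix (Fin 3) (Fin 3) ℂ :=
          ((1 / θ) • !![pρ * u / ρ, pρ, 0; β, ρ * u, pθ; 0, pθ, ρ * u * eθ / θ]).map
            (fun x : ℝ => (x : ℂ))
        let B : Matrix (Fin 3) (Fin 3) ℂ :=
          ((1 / θ) • !![0, 0, 0; 0, μ, 0; 0, 0, α / θ]).map
            (fun x : ℝ => (x : ℂ))
        ∀ W : ℝ → (Fin 3 → ℂ),
          (∀ t : ℝ, 0 ≤ t → ∃ D : Fin 3 → ℂ,
            HasDerivAt W D t ∧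
              A0.mulVec D +
                ((Complex.I * (ξ : ℂ)) • A + ((ξ : ℂ) ^ 2) • B).mulVec (W t) = 0) →
          ∀ t : ℝ, 0 ≤ t →
            (1 + ξ ^ 2) * ‖W t 0‖ ^ 2 + ‖W t 1‖ ^ 2 + ‖W t 2‖ ^ 2 ≤
              C * Real.exp (-2 * c₀ * ξ ^ 2 * t) *
                ((1 + ξ ^ 2) * ‖W 0 0‖ ^ 2 + ‖W 0 1‖ ^ 2 + ‖W 0 2‖ ^ 2) :=
  nsfk_pointwise_fourier_decay_general ρ θ pρ pθ eθ k μ α u hρ hθ hpρ heθ hk hμ hα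
end

section
/- Strict dissipativity of regularity-gain type: there exists a constant c₀ > 0 such that for every ξ ∈ ℝ, every λ ∈ ℂ satisfying det(λ·A⁰ + i·ξ·A(ξ) + ξ²·B) = 0 (the real matrices regarded as complex matrices) obeys Re λ ≤ −c₀·ξ². In particular Re λ < 0 for all ξ ≠ 0, i.e., the linearized Navier–Stokes–Fourier–Korteweg operator is strictly dissipative. -/
/-!
A null vector `(x, y, w)` of the symbol solves three scalar equations in `z = λ + iξu`. Testing
them against `(θβ x̄, θρ ȳ, ρ w̄)` cancels the skew (hyperbolic) coupling and leaves the energy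
identity `Re z · E + ξ² D = 0`, where `E ≍ β|x|² + |y|² + |w|²` but the dissipation `D ≍ |y|² + |w|²`
does not see the density component `x`. That component is recovered from the first two equations:
`|z|²|x|² = ξ²ρ²|y|²` and `ξ²β²|x|² ≲ (|z|² + ξ⁴)|y|² + ξ²|w|²`. Eliminating `|z|` and using
`β ≥ p_ρ` and, thanks to the capillarity, `β ≥ ξ²kρ`, one gets `Y² ≤ a² + bY` for `Y = β|x|²` with
`a, b ≲ |y|² + |w|²`. Hence `E ≲ D` uniformly in `ξ`, and `Re λ ≤ -c₀ξ²`.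
-/

open Complex Matrix

lemma le_add_of_sq_le_sq_add_mul {Y a b : ℝ} (ha : 0 ≤ a) (hb : 0 ≤ b)
    (h : Y ^ 2 ≤ a ^ 2 + b * Y) : Y ≤ a + b := by
  nlinarith

lemma Complex.normSq_add_le_two_mul (a b : ℂ) : normSq (a + b) ≤ 2 * (normSq a + normSq b) := by
  simp only [normSq_apply, add_re, add_im]
  nlinarith [sq_nonneg (a.re - b.re), sq_nonneg (a.im - b.im)]

lemma Complex.weighted_normSq_pos {a b c : ℝ} {x y w : ℂ} (ha : 0 < a) (hb : 0 < b) (hc : 0 < c)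
    (hne : x ≠ 0 ∨ y ≠ 0 ∨ w ≠ 0) : 0 < a * normSq x + b * normSq y + c * normSq w := by
  have hx := mul_nonneg ha.le (normSq_nonneg x)
  have hy := mul_nonneg hb.le (normSq_nonneg y)
  have hw := mul_nonneg hc.le (normSq_nonneg w)
  rcases hne with h | h | h
  · linarith [mul_pos ha (normSq_pos.mpr h)]
  · linarith [mul_pos hb (normSq_pos.mpr h)]
  · linarith [mul_pos hc (normSq_pos.mpr h)]

namespace NSFK

noncomputable def symbol (ρ θ pρ pθ eθ k μ α u ξ : ℝ) (lam : ℂ) : Matrix (Fin 3) (Fin 3) ℂ :=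
  let β : ℝ := pρ + ξ ^ 2 * k * ρ
  let A0 : Matrix (Fin 3) (Fin 3) ℂ :=
    ((1 / θ) • !![pρ / ρ, 0, 0; 0, ρ, 0; 0, 0, eθ * ρ / θ]).map (fun x : ℝ => (x : ℂ))
  let A : Matrix (Fin 3) (Fin 3) ℂ :=
    ((1 / θ) • !![pρ * u / ρ, pρ, 0; β, ρ * u, pθ; 0, pθ, ρ * u * eθ / θ]).map
      (fun x : ℝ => (x : ℂ))
  let B : Matrix (Fin 3) (Fin 3) ℂ :=
    ((1 / θ) • !![0, 0, 0; 0, μ, 0; 0, 0, α / θ]).map (fun x : ℝ => (x : ℂ))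
  lam • A0 + (Complex.I * (ξ : ℂ)) • A + ((ξ : ℂ) ^ 2) • B

lemma exists_ne_zero_of_det_symbol_eq_zero {ρ θ pρ pθ eθ k μ α u ξ : ℝ} {lam : ℂ}
    (hρ : ρ ≠ 0) (hθ : θ ≠ 0) (hpρ : pρ ≠ 0)
    (h : (symbol ρ θ pρ pθ eθ k μ α u ξ lam).det = 0) :
    ∃ x y w : ℂ, (x ≠ 0 ∨ y ≠ 0 ∨ w ≠ 0) ∧
      (lam + I * ξ * u) * x + I * ξ * ρ * y = 0 ∧
      ((lam + I * ξ * u) * ρ + ξ ^ 2 * μ) * y + I * ξ * (pρ + ξ ^ 2 * k * ρ : ℝ) * x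
        + I * ξ * pθ * w = 0 ∧
      ((lam + I * ξ * u) * eθ * ρ + ξ ^ 2 * α) * w + I * ξ * θ * pθ * y = 0 := by
  obtain ⟨v, hv, hMv⟩ := exists_mulVec_eq_zero_iff.mpr h
  have h0 := congrFun hMv 0
  have h1 := congrFun hMv 1
  have h2 := congrFun hMv 2
  simp only [mulVec, dotProduct, symbol, one_div, smul_of, smul_cons, smul_eq_mul, mul_zero,
    smul_empty, Fin.isValue, Matrix.add_apply, Matrix.smul_apply, map_apply, of_apply, cons_val',
    cons_val_fin_one, cons_val_zero, Fin.sum_univ_three, ofReal_mul, ofReal_inv, ofReal_div,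
    ofReal_zero, add_zero, cons_val_one, zero_add, cons_val, zero_mul, Pi.zero_apply, ofReal_add,
    ofReal_pow] at h0 h1 h2
  have hρ' : (ρ : ℂ) ≠ 0 := ofReal_ne_zero.mpr hρ
  have hθ' : (θ : ℂ) ≠ 0 := ofReal_ne_zero.mpr hθ
  have hpρ' : (pρ : ℂ) ≠ 0 := ofReal_ne_zero.mpr hpρ
  refine ⟨v 0, v 1, v 2, ?_, ?_, ?_, ?_⟩
  · by_contra! hzero
    exact hv (funext fun i => by fin_cases i <;> simp [hzero])
  · linear_combination (norm := (field_simp; ring)) (θ * ρ / pρ : ℂ) * h0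
  · linear_combination (norm := (push_cast; field_simp; ring)) (θ : ℂ) * h1
  · linear_combination (norm := (field_simp; ring)) (θ ^ 2 : ℂ) * h2

section ReducedSystem

variable {ρ θ β pθ eθ μ α ξ : ℝ} {z x y w : ℂ}

lemma energy_identity
    (h0 : z * x + I * ξ * ρ * y = 0)
    (h1 : (z * ρ + ξ ^ 2 * μ) * y + I * ξ * β * x + I * ξ * pθ * w = 0)
    (h2 : (z * eθ * ρ + ξ ^ 2 * α) * w + I * ξ * θ * pθ * y = 0) :
    z.re * (θ * β * normSq x + θ * ρ ^ 2 * normSq y + eθ * ρ ^ 2 * normSq w)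
      + ξ ^ 2 * (θ * ρ * μ * normSq y + ρ * α * normSq w) = 0 := by
  simp only [Complex.ext_iff, add_re, add_im, mul_re, mul_im, I_re, I_im, ofReal_re, ofReal_im,
    zero_re, zero_im, ← ofReal_pow] at h0 h1 h2
  obtain ⟨h0r, h0i⟩ := h0
  obtain ⟨h1r, h1i⟩ := h1
  obtain ⟨h2r, h2i⟩ := h2
  simp only [normSq_apply]
  linear_combination (θ * β * x.re) * h0r + (θ * β * x.im) * h0i + (θ * ρ * y.re) * h1r
    + (θ * ρ * y.im) * h1i + (ρ * w.re) * h2r + (ρ * w.im) * h2i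

lemma normSq_mul_normSq_eq (h0 : z * x + I * ξ * ρ * y = 0) :
    normSq z * normSq x = ξ ^ 2 * ρ ^ 2 * normSq y := by
  have h := congrArg normSq (eq_neg_of_add_eq_zero_left h0)
  simp only [map_mul, normSq_neg, normSq_I, normSq_ofReal] at h
  linear_combination h

lemma sq_mul_normSq_le (h1 : (z * ρ + ξ ^ 2 * μ) * y + I * ξ * β * x + I * ξ * pθ * w = 0) :
    ξ ^ 2 * β ^ 2 * normSq x
      ≤ 4 * (ρ ^ 2 * normSq z + ξ ^ 4 * μ ^ 2) * normSq y + 2 * ξ ^ 2 * pθ ^ 2 * normSq w := by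
  have hx : I * ξ * β * x = -((z * ρ + ξ ^ 2 * μ) * y + I * ξ * pθ * w) := by
    linear_combination h1
  have h := congrArg normSq hx
  have hsum := normSq_add_le_two_mul ((z * ρ + ξ ^ 2 * μ) * y) (I * ξ * pθ * w)
  have hcoeff := normSq_add_le_two_mul (z * ρ) (ξ ^ 2 * μ)
  simp only [map_mul, normSq_neg, normSq_I, normSq_ofReal, ← ofReal_pow] at h hsum hcoeff
  nlinarith [mul_le_mul_of_nonneg_right hcoeff (normSq_nonneg y)]

lemma mul_normSq_le_of_ne_zero {p κ : ℝ} (hξ : ξ ≠ 0) (hp : 0 < p) (hκ : 0 < κ)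
    (hpβ : p ≤ β) (hκβ : ξ ^ 2 * κ ≤ β)
    (h0 : z * x + I * ξ * ρ * y = 0)
    (h1 : (z * ρ + ξ ^ 2 * μ) * y + I * ξ * β * x + I * ξ * pθ * w = 0) :
    β * normSq x
      ≤ 2 * ρ ^ 2 * normSq y + (4 * μ ^ 2 / κ * normSq y + 2 * pθ ^ 2 / p * normSq w) := by
  have hX0 := normSq_nonneg x
  have hX1 := normSq_nonneg y
  have hX2 := normSq_nonneg w
  have hsq : (β * normSq x) ^ 2 ≤ (2 * ρ ^ 2 * normSq y) ^ 2
      + 4 * ξ ^ 2 * μ ^ 2 * normSq y * normSq x + 2 * pθ ^ 2 * normSq w * normSq x := by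
    have h := mul_le_mul_of_nonneg_right (sq_mul_normSq_le h1) hX0
    refine le_of_mul_le_mul_left ?_ (pow_pos (abs_pos.mpr hξ) 2)
    rw [sq_abs]
    linear_combination h + 4 * ρ ^ 2 * normSq y * normSq_mul_normSq_eq h0
  have hcoupling : 4 * ξ ^ 2 * μ ^ 2 * normSq y * normSq x
      ≤ 4 * (β / κ) * μ ^ 2 * normSq y * normSq x := by
    gcongr
    exact (le_div_iff₀ hκ).mpr hκβ
  have hthermal : 2 * pθ ^ 2 * normSq w * normSq x
      ≤ 2 * pθ ^ 2 * normSq w * normSq x * (β / p) :=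
    le_mul_of_one_le_right (by positivity) ((one_le_div hp).mpr hpβ)
  refine le_add_of_sq_le_sq_add_mul (by positivity) (by positivity) ?_
  calc _ ≤ (2 * ρ ^ 2 * normSq y) ^ 2 + 4 * (β / κ) * μ ^ 2 * normSq y * normSq x
      + 2 * pθ ^ 2 * normSq w * normSq x * (β / p) := by linarith
    _ = _ := by field_simp; ring

end ReducedSystem

lemma energy_le_of_ne_zero {ρ θ pρ pθ eθ k μ ξ : ℝ} {z x y w : ℂ} (hξ : ξ ≠ 0)
    (hρ : 0 < ρ) (hθ : 0 < θ) (hpρ : 0 < pρ) (hk : 0 < k)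
    (h0 : z * x + I * ξ * ρ * y = 0)
    (h1 : (z * ρ + ξ ^ 2 * μ) * y + I * ξ * (pρ + ξ ^ 2 * k * ρ : ℝ) * x + I * ξ * pθ * w = 0) :
    θ * (pρ + ξ ^ 2 * k * ρ) * normSq x + θ * ρ ^ 2 * normSq y + eθ * ρ ^ 2 * normSq w
      ≤ θ * (3 * ρ ^ 2 + 4 * μ ^ 2 / (k * ρ)) * normSq y
        + (2 * θ * pθ ^ 2 / pρ + eθ * ρ ^ 2) * normSq w := by
  have hpβ : pρ ≤ pρ + ξ ^ 2 * k * ρ := le_add_of_nonneg_right (by positivity)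
  have hκβ : ξ ^ 2 * (k * ρ) ≤ pρ + ξ ^ 2 * k * ρ := by linarith [mul_assoc (ξ ^ 2) k ρ]
  have hx := mul_le_mul_of_nonneg_left
    (mul_normSq_le_of_ne_zero hξ hpρ (mul_pos hk hρ) hpβ hκβ h0 h1) hθ.le
  linear_combination hx

theorem exists_re_le_neg_mul_sq {ρ θ pρ eθ k μ α : ℝ} (pθ : ℝ) (hρ : 0 < ρ) (hθ : 0 < θ)
    (hpρ : 0 < pρ) (heθ : 0 < eθ) (hk : 0 < k) (hμ : 0 < μ) (hα : 0 < α) :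
    ∃ c₀ : ℝ, 0 < c₀ ∧ ∀ (ξ : ℝ) (z x y w : ℂ), (x ≠ 0 ∨ y ≠ 0 ∨ w ≠ 0) →
      z * x + I * ξ * ρ * y = 0 →
      (z * ρ + ξ ^ 2 * μ) * y + I * ξ * (pρ + ξ ^ 2 * k * ρ : ℝ) * x + I * ξ * pθ * w = 0 →
      (z * eθ * ρ + ξ ^ 2 * α) * w + I * ξ * θ * pθ * y = 0 →
      z.re ≤ -c₀ * ξ ^ 2 := by
  set K₁ := θ * (3 * ρ ^ 2 + 4 * μ ^ 2 / (k * ρ))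
  set K₂ := 2 * θ * pθ ^ 2 / pρ + eθ * ρ ^ 2
  have hK₁ : 0 < K₁ := by positivity
  have hK₂ : 0 < K₂ := by positivity
  refine ⟨min (θ * ρ * μ / K₁) (ρ * α / K₂), by positivity, fun ξ z x y w hne h0 h1 h2 => ?_⟩
  set c₀ := min (θ * ρ * μ / K₁) (ρ * α / K₂)
  set E := θ * (pρ + ξ ^ 2 * k * ρ) * normSq x + θ * ρ ^ 2 * normSq y + eθ * ρ ^ 2 * normSq w
  set D := θ * ρ * μ * normSq y + ρ * α * normSq w
  have hE : 0 < E := weighted_normSq_pos (by positivity) (by positivity) (by positivity) hne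
  have hED : ξ ^ 2 * (c₀ * E) ≤ ξ ^ 2 * D := by
    rcases eq_or_ne ξ 0 with rfl | hξ
    · simp
    have hc₁ : c₀ * K₁ ≤ θ * ρ * μ := (le_div_iff₀ hK₁).mp (min_le_left _ _)
    have hc₂ : c₀ * K₂ ≤ ρ * α := (le_div_iff₀ hK₂).mp (min_le_right _ _)
    gcongr
    calc c₀ * E ≤ c₀ * (K₁ * normSq y + K₂ * normSq w) := by
          gcongr; exact energy_le_of_ne_zero hξ hρ hθ hpρ hk h0 h1
      _ ≤ D := by nlinarith [normSq_nonneg y, normSq_nonneg w]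
  have hid := energy_identity h0 h1 h2
  have hneg : (z.re + c₀ * ξ ^ 2) * E ≤ 0 := by linarith
  linarith [nonpos_of_mul_nonpos_left hneg hE]

end NSFK

theorem nsfk_strictly_dissipative_general (ρ θ pρ pθ eθ k μ α u : ℝ)
    (hρ : 0 < ρ) (hθ : 0 < θ) (hpρ : 0 < pρ) (heθ : 0 < eθ)
    (hk : 0 < k) (hμ : 0 < μ) (hα : 0 < α) :
    ∃ c₀ : ℝ, 0 < c₀ ∧
      ∀ ξ : ℝ, ∀ lam : ℂ,
        (let β : ℝ := pρ + ξ ^ 2 * k * ρ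
         let A0 : Matrix (Fin 3) (Fin 3) ℂ :=
          ((1 / θ) • !![pρ / ρ, 0, 0; 0, ρ, 0; 0, 0, eθ * ρ / θ]).map
            (fun x : ℝ => (x : ℂ))
         let A : Matrix (Fin 3) (Fin 3) ℂ :=
          ((1 / θ) • !![pρ * u / ρ, pρ, 0; β, ρ * u, pθ; 0, pθ, ρ * u * eθ / θ]).map
            (fun x : ℝ => (x : ℂ))
         let B : Matrix (Fin 3) (Fin 3) ℂ :=
          ((1 / θ) • !![0, 0, 0; 0, μ, 0; 0, 0, α / θ]).map
            (fun x : ℝ => (x : ℂ))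
         (lam • A0 + (Complex.I * (ξ : ℂ)) • A + ((ξ : ℂ) ^ 2) • B).det = 0) →
        (lam.re ≤ -c₀ * ξ ^ 2 ∧ (ξ ≠ 0 → lam.re < 0)) := by
  obtain ⟨c₀, hc₀, hre⟩ := NSFK.exists_re_le_neg_mul_sq pθ hρ hθ hpρ heθ hk hμ hα
  refine ⟨c₀, hc₀, fun ξ lam hdet => ?_⟩
  obtain ⟨x, y, w, hne, h0, h1, h2⟩ :=
    NSFK.exists_ne_zero_of_det_symbol_eq_zero (u := u) hρ.ne' hθ.ne' hpρ.ne' hdet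
  have hlam : lam.re ≤ -c₀ * ξ ^ 2 := by simpa using hre ξ _ x y w hne h0 h1 h2
  refine ⟨hlam, fun hξ => hlam.trans_lt ?_⟩
  have : 0 < c₀ * ξ ^ 2 := mul_pos hc₀ (pow_pos (abs_pos.mpr hξ) 2 |>.trans_eq (sq_abs ξ))
  linarith

/-- Strict dissipativity of regularity-gain type: every root `λ` of the dispersion
relation `det(λA⁰ + iξA(ξ) + ξ²B) = 0` satisfies `Re λ ≤ −c₀ξ²`; in particular
`Re λ < 0` for all `ξ ≠ 0`. -/
theorem nsfk_strictly_dissipative (ρ θ pρ pθ eθ k μ α u : ℝ)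
    (hρ : 0 < ρ) (hθ : 0 < θ) (hpρ : 0 < pρ) (hpθ : 0 < pθ) (heθ : 0 < eθ)
    (hk : 0 < k) (hμ : 0 < μ) (hα : 0 < α) :
    ∃ c₀ : ℝ, 0 < c₀ ∧
      ∀ ξ : ℝ, ∀ lam : ℂ,
        (let β : ℝ := pρ + ξ ^ 2 * k * ρ
         let A0 : Matrix (Fin 3) (Fin 3) ℂ :=
          ((1 / θ) • !![pρ / ρ, 0, 0; 0, ρ, 0; 0, 0, eθ * ρ / θ]).map
            (fun x : ℝ => (x : ℂ))
         let A : Matrix (Fin 3) (Fin 3) ℂ :=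
          ((1 / θ) • !![pρ * u / ρ, pρ, 0; β, ρ * u, pθ; 0, pθ, ρ * u * eθ / θ]).map
            (fun x : ℝ => (x : ℂ))
         let B : Matrix (Fin 3) (Fin 3) ℂ :=
          ((1 / θ) • !![0, 0, 0; 0, μ, 0; 0, 0, α / θ]).map
            (fun x : ℝ => (x : ℂ))
         (lam • A0 + (Complex.I * (ξ : ℂ)) • A + ((ξ : ℂ) ^ 2) • B).det = 0) →
        (lam.re ≤ -c₀ * ξ ^ 2 ∧ (ξ ≠ 0 → lam.re < 0)) :=
  nsfk_strictly_dissipative_general ρ θ pρ pθ eθ k μ α u hρ hθ hpρ heθ hk hμ hα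
end
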